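/- Let A be a ring such that every prime quotient A/P has zero Jacobson radical (A is Jacobson). If P is a prime ideal of A that is not primitive, then P is not locally closed: the intersection of all prime ideals strictly containing P equals P. -/
import Mathlib


universe u

/-- A two-sided ideal `P` of a ring `A` is prime if `P ≠ A` and whenever `IJ ⊆ P` for
two-sided ideals `I, J` then `I ⊆ P` or `J ⊆ P`. -/
def TwoSidedIdeal.IsPrimeIdeal {A : Type u} [Ring A] (P : TwoSidedIdeal A) : Prop :=
  P ≠ ⊤ ∧ ∀ I J : TwoSidedIdeal A, (∀ x ∈ I, ∀ y ∈ J, x * y ∈ P) → I ≤ P ∨ J ≤ P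

/-- A two-sided ideal `P` is (right) primitive if it is the annihilator of a simple right
`A`-module (a module over the opposite ring `Aᵐᵒᵖ`). -/
def TwoSidedIdeal.IsPrimitiveIdeal {A : Type u} [Ring A] (P : TwoSidedIdeal A) : Prop :=
  ∃ (V : Type u) (_ : AddCommGroup V) (_ : Module Aᵐᵒᵖ V),
    IsSimpleModule Aᵐᵒᵖ V ∧ ∀ a : A, a ∈ P ↔ ∀ v : V, MulOpposite.op a • v = 0

/-- A primitive two-sided ideal is prime. -/
lemma TwoSidedIdeal.IsPrimitiveIdeal.isPrimeIdeal {A : Type u} [Ring A]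
    {R : TwoSidedIdeal A} (h : R.IsPrimitiveIdeal) : R.IsPrimeIdeal := by
  obtain ⟨V, _, _, hsimple, hmem⟩ := h
  haveI := hsimple
  haveI := IsSimpleModule.nontrivial Aᵐᵒᵖ V
  constructor
  · intro htop
    obtain ⟨v, hv⟩ := exists_ne (0 : V)
    have h1 : (1 : A) ∈ R := htop ▸ trivial
    have := (hmem 1).1 h1 v
    simp at this
    exact hv this
  · intro I J hIJ
    by_contra hcon
    push_neg at hcon
    obtain ⟨x, hxI, hxR⟩ := SetLike.not_le_iff_exists.1 hcon.1
    obtain ⟨y, hyJ, hyR⟩ := SetLike.not_le_iff_exists.1 hcon.2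
    -- find v with op x • v ≠ 0
    have hx' : ¬ ∀ v : V, MulOpposite.op x • v = 0 := fun hv => hxR ((hmem x).2 hv)
    push_neg at hx'
    obtain ⟨v, hv⟩ := hx'
    set w : V := MulOpposite.op x • v with hw
    have hspan : Submodule.span Aᵐᵒᵖ {w} = ⊤ := by
      rcases eq_bot_or_eq_top (Submodule.span Aᵐᵒᵖ {w}) with hb | ht
      · exfalso
        have : w ∈ Submodule.span Aᵐᵒᵖ {w} := Submodule.mem_span_singleton_self w
        rw [hb] at this
        exact hv (by simpa using this)
      · exact ht
    apply hyR
    rw [hmem]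
    intro u
    have hu : u ∈ Submodule.span Aᵐᵒᵖ {w} := hspan ▸ Submodule.mem_top
    obtain ⟨r, hr⟩ := Submodule.mem_span_singleton.1 hu
    obtain ⟨a, rfl⟩ : ∃ a : A, r = MulOpposite.op a := ⟨r.unop, rfl⟩
    rw [← hr, hw, smul_smul, smul_smul]
    have hmul : x * a * y ∈ R := hIJ _ (I.mul_mem_right x a hxI) _ hyJ
    have := (hmem _).1 hmul v
    convert this using 2
    simp [mul_assoc]

/-- Let `A` be a Jacobson ring: every prime ideal is the intersection of the primitive
ideals containing it (equivalently, every prime quotient has zero Jacobson radical).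
If `P` is a prime ideal of `A` that is not primitive, then `P` is not locally closed:
the intersection of all prime ideals strictly containing `P` equals `P`. -/
theorem not_locally_closed_of_not_primitive (A : Type u) [Ring A]
    (hJac : ∀ Q : TwoSidedIdeal A, Q.IsPrimeIdeal →
      ∀ a : A, (∀ R : TwoSidedIdeal A, R.IsPrimitiveIdeal → Q ≤ R → a ∈ R) → a ∈ Q)
    (P : TwoSidedIdeal A) (hP : P.IsPrimeIdeal) (hnp : ¬ P.IsPrimitiveIdeal) :
    sInf {Q : TwoSidedIdeal A | Q.IsPrimeIdeal ∧ P < Q} = P := by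
  apply le_antisymm
  · intro a ha
    apply hJac P hP
    intro R hR hPR
    have hne : P ≠ R := fun h => hnp (h ▸ hR)
    have : R ∈ {Q : TwoSidedIdeal A | Q.IsPrimeIdeal ∧ P < Q} :=
      ⟨hR.isPrimeIdeal, lt_of_le_of_ne hPR hne⟩
    exact (TwoSidedIdeal.mem_sInf A).1 ha R this
  · exact le_sInf fun Q hQ => hQ.2.le
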